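/- arXiv:1002.2262 — 3 statements merged into one kernel-verified Lean document; each statement's English description precedes it below -/
import Mathlib

section
/- Let n ≥ 1, let d : Fin n → ℂ be a function with d(i) ∈ {1, -1} for every i, and let D be the n×n diagonal matrix over ℂ with diagonal entries d(i) (so D² = 1 and D⁻¹ = D). Then the following are equivalent: (i) there exists an n×n complex matrix g with gᵀ g = 1 and det g = 1 such that D X D = g X g⁻¹ for every n×n complex matrix X satisfying Xᵀ = -X; (ii) the number of indices i with d(i) = -1 is even, or the number of indices i with d(i) = 1 is even. -/
/-!
If conjugation by `D` agrees on `𝔰𝔬_n` with conjugation by an orthogonal `g`, then `det D = det g`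
as soon as `n` is even (a shadow of `Pf (g X gᵀ) = det g * Pf X`). For `n ≥ 3`, `gᵀ D` centralizes
the matrices `E i j - E j i`, so it is a scalar `c` with `c ^ 2 = 1` and `det D = c ^ n * det g`;
for `n = 2`, `g J gᵀ = det g • J` for `J = !![0, 1; -1, 0]`. If both sign counts were odd, `n`
would be even and `det D = -1 ≠ 1`. Conversely `D` or `-D` itself lies in `SO(n, ℂ)`.
-/

open Matrix Finset

namespace Matrix

section Skew

variable {n α : Type*} [DecidableEq n] [Ring α]

theorem transpose_single_sub_single (i j : n) :
    (single i j (1 : α) - single j i 1)ᵀ = -(single i j 1 - single j i 1) := by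
  rw [transpose_sub, transpose_single, transpose_single, neg_sub]

variable [Fintype n] {M : Matrix n n α} {i j k : n}

theorem col_eq_zero_of_commute_single_sub_single (hM : Commute (single i j 1 - single j i 1) M)
    (hij : i ≠ j) (hki : k ≠ i) (hkj : k ≠ j) : M k i = 0 := by
  have := ext_iff.mpr hM k j
  simp_all [sub_mul, mul_sub, Ne.symm hij]

theorem diag_eq_of_commute_single_sub_single (hM : Commute (single i j 1 - single j i 1) M)
    (hij : i ≠ j) : M i i = M j j := by
  have := ext_iff.mpr hM i j
  simp_all [sub_mul, mul_sub, Ne.symm hij]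

theorem mem_range_scalar_of_commute_single_sub_single (hn : 3 ≤ Fintype.card n)
    (hM : Pairwise fun i j => Commute (single i j 1 - single j i 1) M) :
    M ∈ Set.range (scalar n) := by
  obtain ⟨i⟩ : Nonempty n := Fintype.card_pos_iff.mp (by omega)
  refine ⟨M i i, Matrix.ext fun j k => ?_⟩
  rw [scalar_apply]
  obtain rfl | hjk := eq_or_ne j k
  · rw [diagonal_apply_eq]
    obtain rfl | hij := eq_or_ne i j
    · rfl
    · exact diag_eq_of_commute_single_sub_single (hM hij) hij
  · rw [diagonal_apply_ne _ hjk]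
    obtain ⟨l, hlj, hlk⟩ := ENat.exists_ne_ne_of_three_le (by simpa using hn) j k
    exact (col_eq_zero_of_commute_single_sub_single (hM hlk.symm) hlk.symm hjk hlj.symm).symm

end Skew

section Orthogonal

variable {R : Type*} [CommRing R]

theorem exists_eq_smul_of_forall_skew_conj {n : Type*} [Fintype n] [DecidableEq n]
    (hn : 3 ≤ Fintype.card n) {g h : Matrix n n R} (hg : gᵀ * g = 1) (hh : hᵀ * h = 1)
    (hconj : ∀ X : Matrix n n R, Xᵀ = -X → h * X * hᵀ = g * X * gᵀ) :
    ∃ c : R, c ^ 2 = 1 ∧ h = c • g := by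
  have hcomm : Pairwise fun i j => Commute (single i j 1 - single j i 1) (gᵀ * h) := by
    intro i j _
    set X : Matrix n n R := single i j 1 - single j i 1
    calc X * (gᵀ * h) = gᵀ * (g * X * gᵀ) * h := by
          simp only [Matrix.mul_assoc]; rw [← Matrix.mul_assoc gᵀ g, hg, Matrix.one_mul]
      _ = gᵀ * (h * X * hᵀ) * h := by rw [hconj X (transpose_single_sub_single i j)]
      _ = gᵀ * h * X := by simp only [Matrix.mul_assoc, hh, Matrix.mul_one]
  obtain ⟨c, hc⟩ := mem_range_scalar_of_commute_single_sub_single hn hcomm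
  have hcg : h = c • g := by
    rw [← Matrix.one_mul h, ← mul_eq_one_comm.mp hg, Matrix.mul_assoc, ← hc, scalar_apply,
      ← smul_one_eq_diagonal, Matrix.mul_smul, Matrix.mul_one]
  refine ⟨c, ?_, hcg⟩
  have : Nonempty n := Fintype.card_pos_iff.mp (by omega)
  rw [hcg, transpose_smul, smul_mul_smul_comm, hg, ← sq, smul_one_eq_diagonal,
    ← scalar_apply, ← (scalar n).map_one, scalar_inj] at hh
  exact hh

theorem det_eq_det_of_forall_skew_conj_of_three_le {n : Type*} [Fintype n] [DecidableEq n]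
    (hn : 3 ≤ Fintype.card n) (heven : Even (Fintype.card n)) {g h : Matrix n n R}
    (hg : gᵀ * g = 1) (hh : hᵀ * h = 1)
    (hconj : ∀ X : Matrix n n R, Xᵀ = -X → h * X * hᵀ = g * X * gᵀ) :
    h.det = g.det := by
  obtain ⟨c, hc, rfl⟩ := exists_eq_smul_of_forall_skew_conj hn hg hh hconj
  obtain ⟨m, hm⟩ := heven
  rw [det_smul, hm, ← two_mul, pow_mul, hc, one_pow, one_mul]

theorem mul_mul_transpose_eq_det_smul_fin_two (g : Matrix (Fin 2) (Fin 2) R) :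
    g * !![0, 1; -1, 0] * gᵀ = g.det • !![0, 1; -1, 0] := by
  ext i j
  fin_cases i <;> fin_cases j <;> simp [det_fin_two, Matrix.mul_apply, Fin.sum_univ_two] <;> ring

theorem det_eq_det_of_forall_skew_conj_fin_two {g h : Matrix (Fin 2) (Fin 2) R}
    (hconj : ∀ X : Matrix (Fin 2) (Fin 2) R, Xᵀ = -X → h * X * hᵀ = g * X * gᵀ) :
    h.det = g.det := by
  have := congr_fun₂ (hconj !![0, 1; -1, 0] (by ext i j; fin_cases i <;> fin_cases j <;> simp)) 0 1
  simpa [mul_mul_transpose_eq_det_smul_fin_two] using this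

theorem det_eq_det_of_forall_skew_conj {m : ℕ} (heven : Even m) {g h : Matrix (Fin m) (Fin m) R}
    (hg : gᵀ * g = 1) (hh : hᵀ * h = 1)
    (hconj : ∀ X : Matrix (Fin m) (Fin m) R, Xᵀ = -X → h * X * hᵀ = g * X * gᵀ) :
    h.det = g.det := by
  match m, heven with
  | 0, _ => simp
  | 1, h1 => exact absurd h1 (by decide)
  | 2, _ => exact det_eq_det_of_forall_skew_conj_fin_two hconj
  | m + 3, heven =>
    exact det_eq_det_of_forall_skew_conj_of_three_le (by simp) (by simpa using heven) hg hh hconj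

end Orthogonal

section Sign

variable {ι R : Type*} [Fintype ι] [DecidableEq ι] [CommRing R] {d : ι → R}

theorem diagonal_mul_diagonal_self_of_sign (hd : ∀ i, d i = 1 ∨ d i = -1) :
    diagonal d * diagonal d = 1 := by
  rw [diagonal_mul_diagonal, ← diagonal_one]
  congr 1
  funext i
  rcases hd i with h | h <;> simp [h]

theorem transpose_diagonal_mul_diagonal_of_sign (hd : ∀ i, d i = 1 ∨ d i = -1) :
    (diagonal d)ᵀ * diagonal d = 1 := by
  rw [diagonal_transpose, diagonal_mul_diagonal_self_of_sign hd]

theorem inv_diagonal_of_sign (hd : ∀ i, d i = 1 ∨ d i = -1) : (diagonal d)⁻¹ = diagonal d :=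
  inv_eq_left_inv (diagonal_mul_diagonal_self_of_sign hd)

theorem det_diagonal_of_sign [DecidableEq R] (hd : ∀ i, d i = 1 ∨ d i = -1) :
    (diagonal d).det = (-1) ^ #{i | d i = -1} := by
  rw [det_diagonal, ← prod_filter_mul_prod_filter_not univ (d · = -1),
    prod_congr rfl fun i hi => (mem_filter.1 hi).2, prod_const,
    prod_eq_one fun i hi => (hd i).resolve_right (mem_filter.1 hi).2, mul_one]

end Sign

end Matrix

theorem Finset.card_filter_eq_neg_one_add_card_filter_eq_one {ι R : Type*} [Fintype ι] [Ring R]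
    [CharZero R] [DecidableEq R] {d : ι → R} (hd : ∀ i, d i = 1 ∨ d i = -1) :
    #{i | d i = -1} + #{i | d i = 1} = Fintype.card ι := by
  have : univ.filter (d · = 1) = univ.filter (¬d · = -1) :=
    filter_congr fun i _ => by rcases hd i with h | h <;> norm_num [h]
  rw [this, card_filter_add_card_filter_not, card_univ]

theorem diagonal_sign_inner_iff_even_general
    {n : ℕ} (d : Fin n → ℂ) (hd : ∀ i, d i = 1 ∨ d i = -1) :
    (∃ g : Matrix (Fin n) (Fin n) ℂ, gᵀ * g = 1 ∧ g.det = 1 ∧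
        ∀ X : Matrix (Fin n) (Fin n) ℂ, Xᵀ = -X →
          Matrix.diagonal d * X * Matrix.diagonal d = g * X * g⁻¹) ↔
      (Even (Finset.univ.filter (fun i => d i = -1)).card ∨
        Even (Finset.univ.filter (fun i => d i = 1)).card) := by
  constructor
  · rintro ⟨g, hg, hgdet, hconj⟩
    by_contra! hodd
    simp only [Nat.not_even_iff_odd] at hodd
    have hn : Even n := by
      simpa [card_filter_eq_neg_one_add_card_filter_eq_one hd] using hodd.1.add_odd hodd.2
    have hdet := det_eq_det_of_forall_skew_conj hn hg
      (transpose_diagonal_mul_diagonal_of_sign hd) fun X hX => by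
        rw [diagonal_transpose, hconj X hX, inv_eq_left_inv hg]
    rw [hgdet, det_diagonal_of_sign hd, hodd.1.neg_one_pow] at hdet
    norm_num at hdet
  · have hd' : ∀ i, (-d) i = 1 ∨ (-d) i = -1 := fun i => by
      rcases hd i with h | h <;> simp [h]
    rintro (heven | heven)
    · refine ⟨diagonal d, transpose_diagonal_mul_diagonal_of_sign hd, ?_, fun X _ => ?_⟩
      · rw [det_diagonal_of_sign hd, heven.neg_one_pow]
      · rw [inv_diagonal_of_sign hd]
    · refine ⟨diagonal (-d), transpose_diagonal_mul_diagonal_of_sign hd', ?_, fun X _ => ?_⟩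
      · rw [det_diagonal_of_sign hd']
        simpa [neg_eq_iff_eq_neg] using heven.neg_one_pow
      · rw [inv_diagonal_of_sign hd', Pi.neg_def, ← diagonal_neg, neg_mul, neg_mul_neg]

/-- **Inner conjugation criterion for diagonal sign matrices on `𝔰𝔬_n(ℂ)`.**
Let `n ≥ 1`, let `d : Fin n → ℂ` take values in `{1, -1}`, and let `D` be the diagonal
matrix with entries `d i`.  Then conjugation by `D` on skew-symmetric matrices is
realized by conjugation by some `g ∈ SO(n, ℂ)` if and only if the number of indices
with `d i = -1` is even, or the number of indices with `d i = 1` is even. -/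
theorem diagonal_sign_inner_iff_even
    {n : ℕ} (hn : 1 ≤ n) (d : Fin n → ℂ) (hd : ∀ i, d i = 1 ∨ d i = -1) :
    (∃ g : Matrix (Fin n) (Fin n) ℂ, gᵀ * g = 1 ∧ g.det = 1 ∧
        ∀ X : Matrix (Fin n) (Fin n) ℂ, Xᵀ = -X →
          Matrix.diagonal d * X * Matrix.diagonal d = g * X * g⁻¹) ↔
      (Even (Finset.univ.filter (fun i => d i = -1)).card ∨
        Even (Finset.univ.filter (fun i => d i = 1)).card) :=
  diagonal_sign_inner_iff_even_general d hd
end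

section
/- Let L be a Lie algebra over ℂ, let V be a complex vector space, and let ρ : L → End(V) be a representation of L on V. Suppose x ∈ L is such that ad x : L → L is locally nilpotent (for every y ∈ L there is n with (ad x)^n y = 0) and ρ(x) : V → V is locally nilpotent (for every v ∈ V there is n with ρ(x)^n v = 0). Define E : V → V by E(v) = Σ_{k=0}^{n-1} (1/k!) ρ(x)^k v for any n with ρ(x)^n v = 0, and define e : L → L by e(y) = Σ_{k=0}^{n-1} (1/k!) (ad x)^k y for any n with (ad x)^n y = 0 (these are well defined by local nilpotency). Then E is a bijective ℂ-linear map and E(ρ(y) v) = ρ(e(y)) (E v) for all y ∈ L and v ∈ V; in other words, E is an isomorphism from the representation (V, ρ) to the representation (V, ρ ∘ exp(ad x)). -/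
/-!
Write `exp_n f = ∑_{k<n} f^k / k!` for the truncated exponential `expTrunc`. For commuting
`f, g` the binomial theorem (a Cauchy product) gives `exp_N (f + g) m = exp_n f (exp_p g m)`
whenever `f^n m = 0`, `g^p m = 0` and `n + p ≤ N`. Taking `g = -f` shows that `exp (-ρ x)` is a
two-sided inverse of `E`. For the intertwining relation, the Leibniz rule
`ρ x (ρ y v) = ρ [x, y] v + ρ y (ρ x v)` says that the action map `L ⊗ V → V` intertwines the
commuting operators `ad x ⊗ 1` and `1 ⊗ ρ x` with `ρ x`; applying the identity to `y ⊗ v` gives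
`E (ρ y v) = ρ (e y) (E v)`.
-/

open Finset TensorProduct
open scoped Nat

section Algebra

variable (K : Type*) {A B : Type*} [Field K] [Ring A] [Algebra K A] [Ring B] [Algebra K B]

noncomputable def expTrunc (a : A) (n : ℕ) : A := ∑ k ∈ range n, (k ! : K)⁻¹ • a ^ k

variable {K}

lemma map_expTrunc (F : A →ₐ[K] B) (a : A) (n : ℕ) :
    F (expTrunc K a n) = expTrunc K (F a) n := by
  simp only [expTrunc, map_sum, map_smul, map_pow]

lemma Commute.expTrunc_right {a b : A} (h : Commute a b) (n : ℕ) :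
    Commute a (expTrunc K b n) :=
  Commute.sum_right _ _ _ fun k _ => (h.pow_right k).smul_right _

lemma expTrunc_zero_succ (n : ℕ) : expTrunc K (0 : A) (n + 1) = 1 := by
  simp [expTrunc, sum_range_succ']

lemma inv_factorial_mul_choose [CharZero K] {i m : ℕ} (h : i ≤ m) :
    (m ! : K)⁻¹ * m.choose i = (i ! : K)⁻¹ * ((m - i)! : K)⁻¹ := by
  have hm : (m ! : K) ≠ 0 := Nat.cast_ne_zero.mpr m.factorial_ne_zero
  rw [Nat.cast_choose K h, div_eq_mul_inv, ← mul_assoc, inv_mul_cancel₀ hm, one_mul, mul_inv]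

lemma expTrunc_add_of_commute [CharZero K] {a b : A} (h : Commute a b) (N : ℕ) :
    expTrunc K (a + b) N = ∑ i ∈ range N, (i ! : K)⁻¹ • a ^ i * expTrunc K b (N - i) := by
  calc expTrunc K (a + b) N
      = ∑ m ∈ range N, ∑ i ∈ range (m + 1),
          ((i ! : K)⁻¹ • a ^ i) * (((m - i)! : K)⁻¹ • b ^ (m - i)) := by
        refine sum_congr rfl fun m _ => ?_
        rw [h.add_pow, smul_sum]
        refine sum_congr rfl fun i hi => ?_
        rw [← (Nat.cast_commute _ _).eq, ← nsmul_eq_mul, ← Nat.cast_smul_eq_nsmul K, smul_smul,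
          inv_factorial_mul_choose (Nat.lt_succ_iff.mp (mem_range.mp hi)), smul_mul_smul_comm]
    _ = ∑ i ∈ range N, ∑ j ∈ range (N - i), ((i ! : K)⁻¹ • a ^ i) * ((j ! : K)⁻¹ • b ^ j) :=
        sum_range_diag_flip N fun i j => ((i ! : K)⁻¹ • a ^ i) * ((j ! : K)⁻¹ • b ^ j)
    _ = _ := by simp only [expTrunc, mul_sum]

end Algebra

section Module

variable {K M M' : Type*} [Field K] [AddCommGroup M] [Module K M] [AddCommGroup M'] [Module K M']

lemma expTrunc_apply (f : Module.End K M) (n : ℕ) (m : M) :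
    expTrunc K f n m = ∑ k ∈ range n, (k ! : K)⁻¹ • (f ^ k) m := by
  simp only [expTrunc, LinearMap.sum_apply, LinearMap.smul_apply]

lemma expTrunc_apply_of_le {f : Module.End K M} {m : M} {n N : ℕ} (hm : (f ^ n) m = 0)
    (hN : n ≤ N) : expTrunc K f N m = expTrunc K f n m := by
  simp only [expTrunc_apply]
  refine (sum_subset (range_subset_range.mpr hN) fun k _ hk => ?_).symm
  rw [Module.End.pow_map_zero_of_le (not_lt.mp (mem_range.not.mp hk)) hm, smul_zero]

lemma expTrunc_comp_of_comp_eq {f : Module.End K M} {f' : Module.End K M'} {g : M →ₗ[K] M'}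
    (h : f' ∘ₗ g = g ∘ₗ f) (n : ℕ) : expTrunc K f' n ∘ₗ g = g ∘ₗ expTrunc K f n := by
  ext m
  have hpow (k : ℕ) : (f' ^ k) (g m) = g ((f ^ k) m) :=
    LinearMap.congr_fun (Module.End.commute_pow_left_of_commute h k) m
  simp only [LinearMap.comp_apply, expTrunc_apply, map_sum, map_smul, hpow]

lemma pow_expTrunc_apply_eq_zero {f g : Module.End K M} (h : Commute f g) {m : M} {n : ℕ}
    (hm : (f ^ n) m = 0) (p : ℕ) : (f ^ n) (expTrunc K g p m) = 0 := by
  rw [← Module.End.mul_apply, ((h.pow_left n).expTrunc_right p).eq, Module.End.mul_apply, hm,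
    map_zero]

lemma expTrunc_add_apply [CharZero K] {f g : Module.End K M} (h : Commute f g) {m : M}
    {n p N : ℕ} (hf : (f ^ n) m = 0) (hg : (g ^ p) m = 0) (hN : n + p ≤ N) :
    expTrunc K (f + g) N m = expTrunc K f n (expTrunc K g p m) := by
  have hfg := pow_expTrunc_apply_eq_zero h hf p
  calc expTrunc K (f + g) N m
      = ∑ i ∈ range N, (i ! : K)⁻¹ • (f ^ i) (expTrunc K g (N - i) m) := by
        simp only [expTrunc_add_of_commute h, LinearMap.sum_apply,
          Module.End.mul_apply, LinearMap.smul_apply]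
    _ = ∑ i ∈ range N, (i ! : K)⁻¹ • (f ^ i) (expTrunc K g p m) := by
        refine sum_congr rfl fun i _ => ?_
        rcases lt_or_ge i n with hi | hi
        · rw [expTrunc_apply_of_le hg (by omega)]
        · rw [Module.End.pow_map_zero_of_le hi (pow_expTrunc_apply_eq_zero h hf _),
            Module.End.pow_map_zero_of_le hi hfg]
    _ = _ := by rw [← expTrunc_apply, expTrunc_apply_of_le hfg (by omega)]

lemma pow_neg_apply_eq_zero {f : Module.End K M} {m : M} {n : ℕ} (hm : (f ^ n) m = 0) :
    ((-f) ^ n) m = 0 := by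
  rw [neg_pow, Module.End.mul_apply, hm, map_zero]

lemma expTrunc_apply_expTrunc_neg_apply [CharZero K] {f : Module.End K M} {m : M} {n : ℕ}
    (hm : (f ^ n) m = 0) : expTrunc K f n (expTrunc K (-f) n m) = m := by
  rw [← expTrunc_add_apply (Commute.neg_right (Commute.refl f)) hm (pow_neg_apply_eq_zero hm)
    (Nat.le_succ (n + n)), add_neg_cancel, expTrunc_zero_succ, Module.End.one_apply]

lemma expTrunc_neg_apply_expTrunc_apply [CharZero K] {f : Module.End K M} {m : M} {n : ℕ}
    (hm : (f ^ n) m = 0) : expTrunc K (-f) n (expTrunc K f n m) = m := by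
  simpa only [neg_neg] using expTrunc_apply_expTrunc_neg_apply (pow_neg_apply_eq_zero hm)

end Module

section LocallyNilpotent

variable {K M : Type*} [Field K] [AddCommGroup M] [Module K M]
  {f : Module.End K M} {E : M → M}

lemma bijective_of_forall_eq_expTrunc [CharZero K] (hf : ∀ m, ∃ n, (f ^ n) m = 0)
    (hE : ∀ m n, (f ^ n) m = 0 → E m = expTrunc K f n m) : Function.Bijective E := by
  constructor
  · intro u w huw
    obtain ⟨nu, hu⟩ := hf u
    obtain ⟨nw, hw⟩ := hf w
    have hu' := Module.End.pow_map_zero_of_le (le_max_left nu nw) hu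
    have hw' := Module.End.pow_map_zero_of_le (le_max_right nu nw) hw
    rw [hE u _ hu', hE w _ hw'] at huw
    rw [← expTrunc_neg_apply_expTrunc_apply hu', huw, expTrunc_neg_apply_expTrunc_apply hw']
  · intro w
    obtain ⟨n, hw⟩ := hf w
    refine ⟨expTrunc K (-f) n w, ?_⟩
    rw [hE _ n (pow_expTrunc_apply_eq_zero (Commute.neg_right (Commute.refl f)) hw n),
      expTrunc_apply_expTrunc_neg_apply hw]

lemma map_smul_add_of_forall_eq_expTrunc (hf : ∀ m, ∃ n, (f ^ n) m = 0)
    (hE : ∀ m n, (f ^ n) m = 0 → E m = expTrunc K f n m) (c : K) (u v : M) :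
    E (c • u + v) = c • E u + E v := by
  obtain ⟨nu, hu⟩ := hf u
  obtain ⟨nv, hv⟩ := hf v
  have hu' := Module.End.pow_map_zero_of_le (le_max_left nu nv) hu
  have hv' := Module.End.pow_map_zero_of_le (le_max_right nu nv) hv
  have huv : (f ^ max nu nv) (c • u + v) = 0 := by
    rw [map_add, map_smul, hu', hv', smul_zero, add_zero]
  rw [hE _ _ huv, hE _ _ hu', hE _ _ hv', map_add, map_smul]

end LocallyNilpotent

lemma expTrunc_apply_apply_of_leibniz {K M₁ M₂ M₃ : Type*} [Field K] [CharZero K]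
    [AddCommGroup M₁] [Module K M₁] [AddCommGroup M₂] [Module K M₂] [AddCommGroup M₃] [Module K M₃]
    (β : M₁ →ₗ[K] M₂ →ₗ[K] M₃) {f : Module.End K M₁} {g : Module.End K M₂} {h : Module.End K M₃}
    (hβ : ∀ m w, h (β m w) = β (f m) w + β m (g w)) {m : M₁} {w : M₂} {n p N : ℕ}
    (hm : (f ^ n) m = 0) (hw : (g ^ p) w = 0) (hN : n + p ≤ N) :
    expTrunc K h N (β m w) = β (expTrunc K f n m) (expTrunc K g p w) := by
  set F : Module.End K (M₁ ⊗[K] M₂) := f.rTensor M₂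
  set G : Module.End K (M₁ ⊗[K] M₂) := g.lTensor M₁
  have hFG : Commute F G := by ext; simp [F, G]
  have hlift : h ∘ₗ lift β = lift β ∘ₗ (F + G) := by ext; simp [F, G, hβ]
  have hFm : (F ^ n) (m ⊗ₜ w) = 0 := by simp [F, LinearMap.rTensor_pow, hm]
  have hGw : (G ^ p) (m ⊗ₜ w) = 0 := by simp [G, LinearMap.lTensor_pow, hw]
  have hF : expTrunc K F n = (expTrunc K f n).rTensor M₂ :=
    (map_expTrunc (Module.End.rTensorAlgHom K M₁ M₂) f n).symm
  have hG : expTrunc K G p = (expTrunc K g p).lTensor M₁ :=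
    (map_expTrunc (Module.End.lTensorAlgHom K M₂ M₁) g p).symm
  calc expTrunc K h N (β m w) = lift β (expTrunc K (F + G) N (m ⊗ₜ w)) := by
        simpa using LinearMap.congr_fun (expTrunc_comp_of_comp_eq hlift N) (m ⊗ₜ w)
    _ = β (expTrunc K f n m) (expTrunc K g p w) := by
        rw [expTrunc_add_apply hFG hFm hGw hN, hF, hG]
        simp

attribute [local instance 100] LieRing.ofAssociativeRing

/-- **Exponentials of locally nilpotent elements give module isomorphisms.**
Let `ρ : L → End(V)` be a representation of a complex Lie algebra `L` on a complex
vector space `V`, and let `x ∈ L` be such that `ad x` is locally nilpotent on `L` and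
`ρ(x)` is locally nilpotent on `V`.  Let `E : V → V` be defined by
`E v = Σ_{k<n} (1/k!) ρ(x)^k v` (for any `n` with `ρ(x)^n v = 0`), and let
`e : L → L` be defined by `e y = Σ_{k<n} (1/k!) (ad x)^k y` (for any `n` with
`(ad x)^n y = 0`).  Then `E` is a bijective `ℂ`-linear map and
`E (ρ(y) v) = ρ(e y) (E v)` for all `y ∈ L`, `v ∈ V`; that is, `E` is an isomorphism
from `(V, ρ)` to `(V, ρ ∘ exp(ad x))`. -/
theorem exp_locally_nilpotent_module_iso
    {L V : Type*} [LieRing L] [LieAlgebra ℂ L]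
    [AddCommGroup V] [Module ℂ V]
    (ρ : L →ₗ⁅ℂ⁆ Module.End ℂ V) (x : L)
    (had : ∀ y : L, ∃ n : ℕ, ((LieAlgebra.ad ℂ L x) ^ n) y = 0)
    (hρ : ∀ v : V, ∃ n : ℕ, ((ρ x) ^ n) v = 0)
    (E : V → V)
    (hE : ∀ (v : V) (n : ℕ), ((ρ x) ^ n) v = 0 →
      E v = ∑ k ∈ Finset.range n, ((Nat.factorial k : ℂ))⁻¹ • ((ρ x) ^ k) v)
    (e : L → L)
    (he : ∀ (y : L) (n : ℕ), ((LieAlgebra.ad ℂ L x) ^ n) y = 0 →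
      e y = ∑ k ∈ Finset.range n, ((Nat.factorial k : ℂ))⁻¹ • ((LieAlgebra.ad ℂ L x) ^ k) y) :
    Function.Bijective E ∧
      (∀ (c : ℂ) (u v : V), E (c • u + v) = c • E u + E v) ∧
      (∀ (y : L) (v : V), E ((ρ y) v) = (ρ (e y)) (E v)) := by
  have hE' (v : V) (n : ℕ) (hv : ((ρ x) ^ n) v = 0) : E v = expTrunc ℂ (ρ x) n v :=
    (hE v n hv).trans (expTrunc_apply _ _ _).symm
  have he' (y : L) (n : ℕ) (hy : ((LieAlgebra.ad ℂ L x) ^ n) y = 0) :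
      e y = expTrunc ℂ (LieAlgebra.ad ℂ L x) n y :=
    (he y n hy).trans (expTrunc_apply _ _ _).symm
  have hleibniz (y : L) (v : V) : ρ x (ρ y v) = ρ (LieAlgebra.ad ℂ L x y) v + ρ y (ρ x v) := by
    simp [Ring.lie_def]
  refine ⟨bijective_of_forall_eq_expTrunc hρ hE', map_smul_add_of_forall_eq_expTrunc hρ hE', ?_⟩
  intro y v
  obtain ⟨n, hy⟩ := had y
  obtain ⟨p, hv⟩ := hρ v
  obtain ⟨N, hyv⟩ := hρ (ρ y v)
  rw [hE' _ _ (Module.End.pow_map_zero_of_le (le_max_left N (n + p)) hyv), he' y n hy, hE' v p hv]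
  exact expTrunc_apply_apply_of_leibniz ρ.toLinearMap hleibniz hy hv (le_max_right _ _)
end

section
/- Let G be an abelian group and let A = ⊕_{g∈G} A_g and B = ⊕_{g∈G} B_g be associative unital ℂ-algebras graded by G (so A_g A_h ⊆ A_{g+h} and 1 ∈ A_0, and similarly for B). Let V = ⊕_{γ∈G} V_γ be a G-graded A-module (A_g V_γ ⊆ V_{g+γ}) and W = ⊕_{γ∈G} W_γ a G-graded B-module, and assume V and W are G-graded-simple, i.e. nonzero and with no graded submodules other than 0 and the whole module. Assume moreover that each homogeneous component V_γ is finite-dimensional over ℂ, and that for every α ∈ G with α ≠ 0 there is no A-module isomorphism φ : V → V with φ(V_γ) = V_{γ+α} for all γ ∈ G (i.e. V admits no grading-preserving isomorphism onto its grading shift V^(α)). Then the A ⊗ B-module V ⊗ W, with grading (V ⊗ W)_γ = ⊕_{α+β=γ} V_α ⊗ W_β, is G-graded-simple. -/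
/-!
A nonzero graded submodule `P` of `V ⊗ W` contains a nonzero element `∑ uᵢ ⊗ ωᵢ` with homogeneous
`ωᵢ ∈ W_{βᵢ}` and with the fewest possible terms. Minimality makes the `ωᵢ` linearly independent and
makes the first coefficient determine the others: the tuples `u` with `∑ uᵢ ⊗ ωᵢ ∈ P` form an
`A`-module, closed under taking graded components, on which `u ↦ u₀` is injective, hence bijective
by graded-simplicity of `V`. So `u₀ ↦ uᵢ` is an `A`-linear endomorphism of `V` of degree `β₀ - βᵢ`.
By graded-simplicity it is zero or bijective, in which case it is an isomorphism onto a grading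
shift, which forces degree `0`; and then it is a scalar, since it has an eigenvector in some
finite-dimensional `V_γ` and its eigenspace is graded. Hence the minimal element is a pure tensor
`x ⊗ y` with `y` homogeneous. Graded-simplicity of `V` gives `V ⊗ y ⊆ P`, and then that of `W`
gives `P = V ⊗ W`.
-/

open DirectSum TensorProduct

section Decomposition

variable {ι R M : Type*} [DecidableEq ι] [CommSemiring R] [AddCommMonoid M] [Module R M]
  (ℳ : ι → Submodule R M) [Decomposition ℳ]

theorem Submodule.IsHomogeneous.iSup_inf_eq {p : Submodule R M} (hp : p.IsHomogeneous ℳ) :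
    ⨆ i, p ⊓ ℳ i = p := by
  classical
  refine le_antisymm (iSup_le fun _ => inf_le_left) fun x hx => ?_
  rw [← sum_support_decompose ℳ x]
  exact sum_mem fun i _ => Submodule.mem_iSup_of_mem i ⟨hp i hx, (decompose ℳ x i).2⟩

theorem eq_zero_of_decompose_eq_zero {x : M} (hx : ∀ i, (decompose ℳ x i : M) = 0) : x = 0 := by
  classical
  rw [← sum_support_decompose ℳ x]
  exact Finset.sum_eq_zero fun i _ => hx i

end Decomposition

theorem Submodule.apply_mem_of_eq_iSup_inf {ι R M : Type*} [DecidableEq ι] [Semiring R]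
    [AddCommMonoid M] [Module R M] {T : ι → Submodule R M} {P : Submodule R M}
    (hP : P = ⨆ i, P ⊓ T i) {j : ι} {f : M →ₗ[R] M}
    (hf : ∀ i, ∀ t ∈ T i, f t = if i = j then t else 0) {t : M} (ht : t ∈ P) : f t ∈ P := by
  suffices P ≤ P.comap f from this ht
  refine hP.trans_le (iSup_le fun i t ht => ?_)
  rw [Submodule.mem_comap, hf i t ht.2]
  split_ifs
  exacts [ht.1, P.zero_mem]

section Degree

variable {G R M : Type*} [AddCommGroup G] [DecidableEq G] [CommSemiring R] [AddCommMonoid M]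
  [Module R M] (ℳ : G → Submodule R M) [Decomposition ℳ]

theorem decompose_apply_of_mapsTo {F : Type*} [FunLike F M M] [AddMonoidHomClass F M M]
    (φ : F) {σ : G} (hφ : ∀ γ, Set.MapsTo φ (ℳ γ) (ℳ (γ + σ))) (x : M) (γ : G) :
    (decompose ℳ (φ x) (γ + σ) : M) = φ (decompose ℳ x γ) := by
  induction x using Decomposition.inductionOn ℳ with
  | zero => simp
  | @homogeneous δ x =>
    by_cases h : δ = γ
    · subst h
      rw [decompose_of_mem_same ℳ x.2, decompose_of_mem_same ℳ (hφ δ x.2)]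
    · rw [decompose_of_mem_ne ℳ x.2 h, decompose_of_mem_ne ℳ (hφ δ x.2) (by simpa using h),
        map_zero]
  | add x y hx hy => simp [decompose_add, hx, hy]

end Degree

section HomogeneousMaps

variable {G R A V : Type*} [AddCommGroup G] [DecidableEq G] [CommSemiring R] [Ring A]
  [AddCommGroup V] [Module R V] [Module A V] {𝒱 : G → Submodule R V} [Decomposition 𝒱]
  {φ : V →ₗ[A] V} {σ : G}

theorem LinearMap.ker_isHomogeneous_of_mapsTo (hφ : ∀ γ, Set.MapsTo φ (𝒱 γ) (𝒱 (γ + σ))) :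
    (LinearMap.ker φ).IsHomogeneous 𝒱 := by
  intro γ x hx
  rw [LinearMap.mem_ker, ← decompose_apply_of_mapsTo 𝒱 φ hφ, LinearMap.mem_ker.mp hx]
  simp

theorem LinearMap.range_isHomogeneous_of_mapsTo (hφ : ∀ γ, Set.MapsTo φ (𝒱 γ) (𝒱 (γ + σ))) :
    (LinearMap.range φ).IsHomogeneous 𝒱 := by
  rintro γ _ ⟨y, rfl⟩
  refine ⟨decompose 𝒱 y (γ - σ), ?_⟩
  rw [← decompose_apply_of_mapsTo 𝒱 φ hφ, sub_add_cancel]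

theorem LinearMap.image_eq_of_mapsTo (hφ : ∀ γ, Set.MapsTo φ (𝒱 γ) (𝒱 (γ + σ)))
    (hsurj : Function.Surjective φ) (γ : G) : φ '' 𝒱 γ = 𝒱 (γ + σ) := by
  refine (hφ γ).image_subset.antisymm fun y hy => ?_
  obtain ⟨x, rfl⟩ := hsurj y
  refine ⟨decompose 𝒱 x γ, (decompose 𝒱 x γ).2, ?_⟩
  rw [← decompose_apply_of_mapsTo 𝒱 φ hφ, decompose_of_mem_same 𝒱 hy]

variable (hV : ∀ P : Submodule A V, P.IsHomogeneous 𝒱 → P = ⊥ ∨ P = ⊤)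
include hV

theorem LinearMap.bijective_of_mapsTo (hφ : ∀ γ, Set.MapsTo φ (𝒱 γ) (𝒱 (γ + σ))) (hφ0 : φ ≠ 0) :
    Function.Bijective φ := by
  refine ⟨LinearMap.ker_eq_bot.mp ?_, LinearMap.range_eq_top.mp ?_⟩
  · exact (hV _ (LinearMap.ker_isHomogeneous_of_mapsTo hφ)).resolve_right
      (mt LinearMap.ker_eq_top.mp hφ0)
  · exact (hV _ (LinearMap.range_isHomogeneous_of_mapsTo hφ)).resolve_left
      (mt LinearMap.range_eq_bot.mp hφ0)

end HomogeneousMaps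

section Schur

variable {K G A V : Type*} [Field K] [IsAlgClosed K] [AddCommGroup G] [DecidableEq G] [Ring A]
  [Algebra K A] [AddCommGroup V] [Module K V] [Module A V] [IsScalarTower K A V]
  {𝒱 : G → Submodule K V} [Decomposition 𝒱]
  (hV : ∀ P : Submodule A V, P.IsHomogeneous 𝒱 → P = ⊥ ∨ P = ⊤)
  (hVfin : ∀ γ, FiniteDimensional K (𝒱 γ))
include hV hVfin

theorem LinearMap.exists_eq_smul_of_mapsTo_self {φ : V →ₗ[A] V}
    (hφ : ∀ γ, Set.MapsTo φ (𝒱 γ) (𝒱 γ)) : ∃ μ : K, ∀ x, φ x = μ • x := by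
  rcases subsingleton_or_nontrivial V with hV0 | hV0
  · exact ⟨0, fun _ => Subsingleton.elim _ _⟩
  obtain ⟨x, hx⟩ := exists_ne (0 : V)
  obtain ⟨γ, hγ⟩ : ∃ γ, (decompose 𝒱 x γ : V) ≠ 0 := by
    by_contra! h
    exact hx (eq_zero_of_decompose_eq_zero 𝒱 h)
  have : Nontrivial (𝒱 γ) := ⟨_, 0, fun h => hγ (congrArg Subtype.val h)⟩
  obtain ⟨μ, hμ⟩ := Module.End.exists_eigenvalue ((φ.restrictScalars K).restrict (hφ γ))
  obtain ⟨z, hz⟩ := hμ.exists_hasEigenvector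
  set ψ : V →ₗ[A] V := φ - μ • LinearMap.id
  have hψ : ∀ γ, Set.MapsTo ψ (𝒱 γ) (𝒱 (γ + 0)) := fun γ y hy => by
    rw [add_zero]
    exact sub_mem (hφ γ hy) (Submodule.smul_mem _ μ hy)
  have hψz : (z : V) ∈ LinearMap.ker ψ := by
    have hφz : φ z = μ • (z : V) := congrArg Subtype.val (Module.End.mem_eigenspace_iff.mp hz.1)
    simp [ψ, hφz]
  have hker : LinearMap.ker ψ = ⊤ :=
    (hV _ (LinearMap.ker_isHomogeneous_of_mapsTo hψ)).resolve_left fun h => by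
      rw [h, Submodule.mem_bot] at hψz
      exact hz.2 (Subtype.ext hψz)
  refine ⟨μ, fun y => ?_⟩
  have : y ∈ LinearMap.ker ψ := hker ▸ Submodule.mem_top
  simpa [ψ, sub_eq_zero] using this

theorem LinearMap.exists_eq_smul_of_mapsTo
    (hshift : ∀ α : G, α ≠ 0 → ¬ ∃ φ : V ≃ₗ[A] V, ∀ γ, φ '' 𝒱 γ = 𝒱 (γ + α))
    {φ : V →ₗ[A] V} {σ : G} (hφ : ∀ γ, Set.MapsTo φ (𝒱 γ) (𝒱 (γ + σ))) :
    ∃ μ : K, (∀ x, φ x = μ • x) ∧ (μ ≠ 0 → σ = 0) := by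
  by_cases hφ0 : φ = 0
  · exact ⟨0, fun x => by simp [hφ0], fun h => absurd rfl h⟩
  have hbij := φ.bijective_of_mapsTo hV hφ hφ0
  obtain rfl : σ = 0 := by
    by_contra hσ
    exact hshift σ hσ ⟨.ofBijective φ hbij, φ.image_eq_of_mapsTo hφ hbij.2⟩
  obtain ⟨μ, hμ⟩ := φ.exists_eq_smul_of_mapsTo_self hV hVfin (by simpa using hφ)
  exact ⟨μ, hμ, fun _ => rfl⟩

end Schur

section TensorProduct

variable {K V W : Type*} [Field K] [AddCommGroup V] [Module K V] [AddCommGroup W] [Module K W]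

theorem LinearIndependent.eq_zero_of_sum_tmul_eq_zero {ι : Type*} [Fintype ι] {ω : ι → W}
    (hω : LinearIndependent K ω) {v : ι → V} (h : ∑ i, v i ⊗ₜ[K] ω i = 0) : v = 0 := by
  classical
  set b := Module.Basis.span hω
  have hb : ∑ i, v i ⊗ₜ[K] b i = 0 := by
    refine Module.Flat.lTensor_preserves_injective_linearMap (M := V) _
      (Submodule.span K (Set.range ω)).injective_subtype ?_
    simpa [map_sum, b, Module.Basis.span_apply] using h
  have := TensorProduct.sum_tmul_basis_right_eq_zero b (Finsupp.equivFunOnFinite.symm v)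
    (by rwa [Finsupp.sum_fintype _ _ (by simp)])
  funext i
  simpa using DFunLike.congr_fun this i

theorem TensorProduct.tmul_ne_zero_of_ne_zero {x : V} {y : W} (hx : x ≠ 0) (hy : y ≠ 0) :
    x ⊗ₜ[K] y ≠ 0 := fun h =>
  hx (congrFun ((linearIndependent_unique_iff (v := fun _ : Unit => y)).mpr hy
    |>.eq_zero_of_sum_tmul_eq_zero (v := fun _ => x) (by simpa using h)) ())

theorem exists_sum_tmul_succAbove_of_not_linearIndependent {m : ℕ} {ω : Fin (m + 1) → W}
    (hω : ¬ LinearIndependent K ω) (v : Fin (m + 1) → V) :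
    ∃ (i₀ : Fin (m + 1)) (v' : Fin m → V),
      ∑ i, v i ⊗ₜ[K] ω i = ∑ j, v' j ⊗ₜ[K] ω (i₀.succAbove j) := by
  obtain ⟨i₀, hi₀⟩ : ∃ i₀, ω i₀ ∈ Submodule.span K (Set.range (ω ∘ i₀.succAbove)) := by
    simpa [linearIndependent_iff_notMem_span, Set.range_comp, ← Set.compl_eq_univ_sdiff]
      using hω
  obtain ⟨c, hc⟩ := Submodule.mem_span_range_iff_exists_fun K |>.mp hi₀
  refine ⟨i₀, fun j => v (i₀.succAbove j) + c j • v i₀, ?_⟩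
  rw [Fin.sum_univ_succAbove _ i₀, ← hc, tmul_sum]
  simp only [Function.comp_apply, tmul_smul, smul_tmul', add_tmul, Finset.sum_add_distrib,
    add_comm]

end TensorProduct

section TensorGrading

variable {G R V W : Type*} [AddCommGroup G] [DecidableEq G] [CommSemiring R]
  [AddCommMonoid V] [Module R V] [AddCommMonoid W] [Module R W]
  (𝒱 : G → Submodule R V) (𝒲 : G → Submodule R W)

def tensorGrading (γ : G) : Submodule R (V ⊗[R] W) :=
  ⨆ (p : G × G) (_ : p.1 + p.2 = γ),
    LinearMap.range (TensorProduct.map (𝒱 p.1).subtype (𝒲 p.2).subtype)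

variable [Decomposition 𝒱] [Decomposition 𝒲]

/-- The projection onto `tensorGrading 𝒱 𝒲 δ`: `x ⊗ y ↦ ∑ α, x_α ⊗ y_{δ - α}`. -/
noncomputable def tensorProj (δ : G) : V ⊗[R] W →ₗ[R] V ⊗[R] W :=
  lift <| toModule R G _ (fun α => (mk R V W ∘ₗ (𝒱 α).subtype).compl₂ <|
      (𝒲 (δ - α)).subtype ∘ₗ component R G (fun β => 𝒲 β) (δ - α) ∘ₗ
        (decomposeLinearEquiv 𝒲).toLinearMap) ∘ₗ
    (decomposeLinearEquiv 𝒱).toLinearMap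

variable {𝒱 𝒲}

theorem tensorProj_tmul_of_mem_left {x : V} {α : G} (hx : x ∈ 𝒱 α) (y : W) (δ : G) :
    tensorProj 𝒱 𝒲 δ (x ⊗ₜ y) = x ⊗ₜ (decompose 𝒲 y (δ - α) : W) := by
  simp only [tensorProj, lift.tmul, LinearMap.coe_comp, LinearEquiv.coe_coe, Function.comp_apply,
    decomposeLinearEquiv_apply, decompose_of_mem 𝒱 hx, ← lof_eq_of R, toModule_lof,
    LinearMap.compl₂_apply, Submodule.coe_subtype, mk_apply]
  rfl

theorem tensorProj_tmul_of_mem_right {y : W} {β : G} (hy : y ∈ 𝒲 β) (x : V) (δ : G) :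
    tensorProj 𝒱 𝒲 δ (x ⊗ₜ y) = (decompose 𝒱 x (δ - β) : V) ⊗ₜ y := by
  induction x using Decomposition.inductionOn 𝒱 with
  | zero => simp
  | @homogeneous α x =>
    rw [tensorProj_tmul_of_mem_left x.2]
    by_cases h : δ - α = β
    · rw [decompose_of_mem_same 𝒲 (h ▸ hy), ← h, sub_sub_cancel, decompose_of_mem_same 𝒱 x.2]
    · rw [decompose_of_mem_ne 𝒲 hy (Ne.symm h), decompose_of_mem_ne 𝒱 x.2 (by grind)]
      simp
  | add x x' hx hx' => simp [add_tmul, decompose_add, hx, hx']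

theorem tensorProj_of_mem_tensorGrading {γ δ : G} {t : V ⊗[R] W}
    (ht : t ∈ tensorGrading 𝒱 𝒲 γ) : tensorProj 𝒱 𝒲 δ t = if γ = δ then t else 0 := by
  suffices tensorGrading 𝒱 𝒲 γ ≤
      LinearMap.eqLocus (tensorProj 𝒱 𝒲 δ) (if γ = δ then LinearMap.id else 0) by
    have := this ht
    split_ifs at this ⊢ <;> simpa using this
  refine iSup₂_le fun p hp => ?_
  rintro _ ⟨t, rfl⟩
  induction t using TensorProduct.induction_on with
  | zero => simp
  | tmul x y =>
    rw [map_tmul, LinearMap.mem_eqLocus, Submodule.subtype_apply, Submodule.subtype_apply,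
      tensorProj_tmul_of_mem_left x.2]
    split_ifs with h
    · rw [decompose_of_mem_same 𝒲 (by rw [← h, ← hp, add_sub_cancel_left]; exact y.2)]
      rfl
    · rw [decompose_of_mem_ne 𝒲 y.2 fun h' => h (by rw [← hp, h', add_sub_cancel])]
      simp
  | add t t' ht ht' => rw [map_add]; exact add_mem ht ht'

end TensorGrading

section Representation

variable {ι R V W : Type*} [DecidableEq ι] [CommSemiring R]
  [AddCommMonoid V] [Module R V] [AddCommMonoid W] [Module R W]
  (𝒲 : ι → Submodule R W) [Decomposition 𝒲]

theorem exists_sum_tmul_eq_of_homogeneous_right (t : V ⊗[R] W) :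
    ∃ (k : ℕ) (u : Fin k → V) (ω : Fin k → W) (β : Fin k → ι),
      (∀ i, ω i ∈ 𝒲 (β i)) ∧ ∑ i, u i ⊗ₜ[R] ω i = t := by
  classical
  set S : Set (V ⊗[R] W) := {t | ∃ x y β, y ∈ 𝒲 β ∧ x ⊗ₜ[R] y = t}
  have hS : Submodule.span R S = ⊤ := by
    refine top_le_iff.mp <| (span_tmul_eq_top R V W).ge.trans <| Submodule.span_le.mpr ?_
    rintro _ ⟨x, y, rfl⟩
    rw [← sum_support_decompose 𝒲 y, tmul_sum]
    exact sum_mem fun β _ => Submodule.subset_span ⟨x, _, β, (decompose 𝒲 y β).2, rfl⟩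
  obtain ⟨k, c, g, hg⟩ := Submodule.mem_span_set'.mp (hS ▸ Submodule.mem_top : t ∈ _)
  choose x y β hy hxy using fun i => (g i).2
  exact ⟨k, fun i => c i • x i, y, β, hy, by simpa [← smul_tmul', hxy] using hg⟩

end Representation

section MinimalSum

variable {K G A V W : Type*} [Field K] [Ring A] [Algebra K A] [AddCommGroup V] [Module K V]
  [Module A V] [IsScalarTower K A V] [AddCommGroup W] [Module K W]

variable (P : Submodule A (V ⊗[K] W))

def coeffSubmodule {ι : Type*} [Fintype ι] (ω : ι → W) : Submodule A (ι → V) where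
  carrier := {u | ∑ i, u i ⊗ₜ[K] ω i ∈ P}
  add_mem' hu hu' := by simpa [add_tmul, Finset.sum_add_distrib] using add_mem hu hu'
  zero_mem' := by simp
  smul_mem' a u hu := by simpa [Finset.smul_sum, smul_tmul'] using P.smul_mem a hu

def HasNonzeroTmulSum (𝒲 : G → Submodule K W) (k : ℕ) : Prop :=
  ∃ (ω : Fin k → W) (β : Fin k → G), (∀ i, ω i ∈ 𝒲 (β i)) ∧
    ∃ u ∈ coeffSubmodule P ω, ∑ i, u i ⊗ₜ[K] ω i ≠ 0

variable {P} {𝒲 : G → Submodule K W}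

theorem linearIndependent_of_not_hasNonzeroTmulSum {m : ℕ} (hmin : ¬ HasNonzeroTmulSum P 𝒲 m)
    {ω : Fin (m + 1) → W} {β : Fin (m + 1) → G} (hω : ∀ i, ω i ∈ 𝒲 (β i))
    {u : Fin (m + 1) → V} (hu : u ∈ coeffSubmodule P ω) (hne : ∑ i, u i ⊗ₜ[K] ω i ≠ 0) :
    LinearIndependent K ω := by
  by_contra hind
  obtain ⟨i₀, v, hv⟩ := exists_sum_tmul_succAbove_of_not_linearIndependent hind u
  exact hmin ⟨ω ∘ i₀.succAbove, β ∘ i₀.succAbove, fun j => hω _, v,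
    show _ ∈ P from hv ▸ hu, hv ▸ hne⟩

variable [AddCommGroup G] [DecidableEq G] {𝒱 : G → Submodule K V} [Decomposition 𝒱]
  [Decomposition 𝒲]

theorem decompose_mem_coeffSubmodule (hP : ∀ δ, ∀ t ∈ P, tensorProj 𝒱 𝒲 δ t ∈ P)
    {ι : Type*} [Fintype ι] {ω : ι → W} {β : ι → G} (hω : ∀ i, ω i ∈ 𝒲 (β i))
    {u : ι → V} (hu : u ∈ coeffSubmodule P ω) (δ : G) :
    (fun i => (decompose 𝒱 (u i) (δ - β i) : V)) ∈ coeffSubmodule P ω := by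
  simpa [coeffSubmodule, map_sum, tensorProj_tmul_of_mem_right (hω _)] using hP δ _ hu

section Shortest

/- Here `∑ i, u i ⊗ ω i ∈ P`, with `m + 1` homogeneous `ω i`, is a nonzero element of minimal
length: `hmin` excludes nonzero such sums with `m` terms. -/

variable (hP : ∀ δ, ∀ t ∈ P, tensorProj 𝒱 𝒲 δ t ∈ P) {m : ℕ}
  (hmin : ¬ HasNonzeroTmulSum P 𝒲 m) {ω : Fin (m + 1) → W} {β : Fin (m + 1) → G}
  (hω : ∀ i, ω i ∈ 𝒲 (β i))

include hP hmin hω in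
theorem eq_zero_of_mem_coeffSubmodule_of_head_eq_zero (hind : LinearIndependent K ω)
    {u : Fin (m + 1) → V} (hu : u ∈ coeffSubmodule P ω) (hu0 : u 0 = 0) : u = 0 := by
  have hproj : ∀ δ, (fun i => (decompose 𝒱 (u i) (δ - β i) : V)) = 0 := by
    intro δ
    have hmem := decompose_mem_coeffSubmodule hP hω hu δ
    refine hind.eq_zero_of_sum_tmul_eq_zero ?_
    have htail : ∑ i, (decompose 𝒱 (u i) (δ - β i) : V) ⊗ₜ[K] ω i =
        ∑ j : Fin m, (decompose 𝒱 (u j.succ) (δ - β j.succ) : V) ⊗ₜ[K] ω j.succ := by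
      simp [Fin.sum_univ_succ, hu0]
    by_contra hne
    exact hmin ⟨ω ∘ Fin.succ, β ∘ Fin.succ, fun j => hω _, _,
      show _ ∈ P from htail ▸ hmem, htail ▸ hne⟩
  funext i
  refine eq_zero_of_decompose_eq_zero 𝒱 fun γ => ?_
  have := congrFun (hproj (γ + β i)) i
  rwa [add_sub_cancel_right] at this

include hP hmin hω in
theorem bijective_head_of_not_hasNonzeroTmulSum
    (hV : ∀ Q : Submodule A V, Q.IsHomogeneous 𝒱 → Q = ⊥ ∨ Q = ⊤) {u : Fin (m + 1) → V}
    (hu : u ∈ coeffSubmodule P ω) (hne : ∑ i, u i ⊗ₜ[K] ω i ≠ 0) :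
    Function.Bijective (LinearMap.proj 0 ∘ₗ (coeffSubmodule P ω).subtype) := by
  have hzero {v} := eq_zero_of_mem_coeffSubmodule_of_head_eq_zero (u := v) hP hmin hω
    (linearIndependent_of_not_hasNonzeroTmulSum hmin hω hu hne)
  refine ⟨LinearMap.ker_eq_bot.mp <| LinearMap.ker_eq_bot'.mpr fun v hv =>
    Subtype.ext (hzero v.2 hv), LinearMap.range_eq_top.mp <| (hV _ ?_).resolve_left ?_⟩
  · rintro δ _ ⟨v, rfl⟩
    refine ⟨⟨_, decompose_mem_coeffSubmodule hP hω v.2 (δ + β 0)⟩, ?_⟩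
    show (decompose 𝒱 (v.1 0) (δ + β 0 - β 0) : V) = decompose 𝒱 (v.1 0) δ
    rw [add_sub_cancel_right]
  · intro h
    have hu0 : u 0 ∈ LinearMap.range (LinearMap.proj 0 ∘ₗ (coeffSubmodule P ω).subtype) :=
      ⟨⟨u, hu⟩, rfl⟩
    rw [h, Submodule.mem_bot] at hu0
    exact hne (by simp [hzero hu hu0])

include hP hω in
theorem mapsTo_proj_comp_head_symm
    (hbij : Function.Bijective (LinearMap.proj 0 ∘ₗ (coeffSubmodule P ω).subtype))
    (i : Fin (m + 1)) (γ : G) :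
    Set.MapsTo (LinearMap.proj i ∘ₗ (coeffSubmodule P ω).subtype ∘ₗ
      (LinearEquiv.ofBijective _ hbij).symm.toLinearMap) (𝒱 γ) (𝒱 (γ + (β 0 - β i))) := by
  intro x hx
  obtain ⟨v, rfl⟩ := (LinearEquiv.ofBijective _ hbij).surjective x
  have hv : (⟨_, decompose_mem_coeffSubmodule hP hω v.2 (γ + β 0)⟩ : coeffSubmodule P ω) = v := by
    refine hbij.1 ?_
    show (decompose 𝒱 (v.1 0) (γ + β 0 - β 0) : V) = v.1 0
    rw [add_sub_cancel_right]
    exact decompose_of_mem_same 𝒱 hx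
  simp only [LinearMap.coe_comp, Function.comp_apply, LinearEquiv.coe_coe,
    LinearEquiv.symm_apply_apply, Submodule.subtype_apply, LinearMap.proj_apply]
  rw [← hv, ← add_sub_assoc]
  exact (decompose 𝒱 _ _).2

include hP hmin hω in
theorem exists_sum_tmul_eq_tmul_of_not_hasNonzeroTmulSum [IsAlgClosed K]
    (hV : ∀ Q : Submodule A V, Q.IsHomogeneous 𝒱 → Q = ⊥ ∨ Q = ⊤)
    (hVfin : ∀ γ, FiniteDimensional K (𝒱 γ))
    (hshift : ∀ α : G, α ≠ 0 → ¬ ∃ φ : V ≃ₗ[A] V, ∀ γ, φ '' 𝒱 γ = 𝒱 (γ + α))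
    {u : Fin (m + 1) → V} (hu : u ∈ coeffSubmodule P ω) (hne : ∑ i, u i ⊗ₜ[K] ω i ≠ 0) :
    ∃ y ∈ 𝒲 (β 0), ∑ i, u i ⊗ₜ[K] ω i = u 0 ⊗ₜ y := by
  have hbij := bijective_head_of_not_hasNonzeroTmulSum hP hmin hω hV hu hne
  choose μ hμ hμβ using fun i => LinearMap.exists_eq_smul_of_mapsTo hV hVfin hshift
    (mapsTo_proj_comp_head_symm hP hω hbij i)
  have hu0 : (LinearEquiv.ofBijective _ hbij).symm (u 0) = ⟨u, hu⟩ :=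
    (LinearEquiv.ofBijective _ hbij).symm_apply_eq.mpr rfl
  have hui : ∀ i, u i = μ i • u 0 := fun i => by simpa [hu0] using hμ i (u 0)
  refine ⟨∑ i, μ i • ω i, sum_mem fun i _ => ?_, ?_⟩
  · rcases eq_or_ne (μ i) 0 with h | h
    · simp [h]
    · rw [sub_eq_zero.mp (hμβ i h)]
      exact Submodule.smul_mem _ _ (hω i)
  · rw [tmul_sum]
    exact Finset.sum_congr rfl fun i _ => by rw [tmul_smul, smul_tmul', ← hui]

end Shortest

theorem exists_tmul_mem_of_ne_bot [IsAlgClosed K]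
    (hV : ∀ Q : Submodule A V, Q.IsHomogeneous 𝒱 → Q = ⊥ ∨ Q = ⊤)
    (hVfin : ∀ γ, FiniteDimensional K (𝒱 γ))
    (hshift : ∀ α : G, α ≠ 0 → ¬ ∃ φ : V ≃ₗ[A] V, ∀ γ, φ '' 𝒱 γ = 𝒱 (γ + α))
    (hP : ∀ δ, ∀ t ∈ P, tensorProj 𝒱 𝒲 δ t ∈ P) (hP0 : P ≠ ⊥) :
    ∃ (x : V) (y : W) (β : G), y ∈ 𝒲 β ∧ x ⊗ₜ[K] y ∈ P ∧ x ⊗ₜ[K] y ≠ 0 := by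
  classical
  have hex : ∃ k, HasNonzeroTmulSum P 𝒲 k := by
    obtain ⟨t, ht, ht0⟩ := Submodule.exists_mem_ne_zero_of_ne_bot hP0
    obtain ⟨k, u, ω, β, hω, rfl⟩ := exists_sum_tmul_eq_of_homogeneous_right 𝒲 t
    exact ⟨k, ω, β, hω, u, ht, ht0⟩
  obtain ⟨k, ⟨ω, β, hω, u, hu, hne⟩, hmin⟩ :
      ∃ k, HasNonzeroTmulSum P 𝒲 k ∧ ∀ j < k, ¬ HasNonzeroTmulSum P 𝒲 j :=
    ⟨_, Nat.find_spec hex, fun _ => Nat.find_min hex⟩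
  cases k with
  | zero => simp at hne
  | succ m =>
    obtain ⟨y, hy, hsum⟩ := exists_sum_tmul_eq_tmul_of_not_hasNonzeroTmulSum hP
      (hmin m m.lt_succ_self) hω hV hVfin hshift hu hne
    exact ⟨u 0, y, β 0, hy, hsum ▸ hu, hsum ▸ hne⟩

end MinimalSum

section Spanning

variable {K G A B V W : Type*} [CommRing K] [AddCommGroup G] [DecidableEq G] [Ring A] [Ring B]
  [AddCommGroup V] [Module K V] [Module A V] [SMulCommClass K A V]
  [AddCommGroup W] [Module K W] [Module B W] [SMulCommClass B K W]
  {𝒱 : G → Submodule K V} {𝒲 : G → Submodule K W} [Decomposition 𝒱] [Decomposition 𝒲]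

theorem forall_tmul_mem_of_tmul_mem (hV : ∀ Q : Submodule A V, Q.IsHomogeneous 𝒱 → Q = ⊥ ∨ Q = ⊤)
    {P : Submodule A (V ⊗[K] W)} (hP : ∀ δ, ∀ t ∈ P, tensorProj 𝒱 𝒲 δ t ∈ P) {x : V} {y : W}
    {β : G} (hy : y ∈ 𝒲 β) (hxy : x ⊗ₜ[K] y ∈ P) (hx : x ≠ 0) (x' : V) : x' ⊗ₜ[K] y ∈ P := by
  let X : Submodule A V := P.comap ((AlgebraTensorModule.mk K A V W).flip y)
  have hX : X = ⊤ := by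
    refine (hV X fun δ x' (hx' : x' ⊗ₜ[K] y ∈ P) => ?_).resolve_left fun h => hx ?_
    · have := hP (δ + β) _ hx'
      rwa [tensorProj_tmul_of_mem_right hy, add_sub_cancel_right] at this
    · exact (Submodule.mem_bot A).mp (by rw [← h]; exact hxy)
  exact (hX ▸ Submodule.mem_top : x' ∈ X)

theorem eq_top_of_forall_tmul_mem (hW : ∀ Q : Submodule B W, Q.IsHomogeneous 𝒲 → Q = ⊥ ∨ Q = ⊤)
    {P : Submodule K (V ⊗[K] W)} (hP : ∀ δ, ∀ t ∈ P, tensorProj 𝒱 𝒲 δ t ∈ P)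
    (hPB : ∀ b : B, ∀ t ∈ P, (DistribSMul.toLinearMap K W b).lTensor V t ∈ P) {y : W}
    (hy : y ≠ 0) (hVy : ∀ x, x ⊗ₜ[K] y ∈ P) : P = ⊤ := by
  let Y : Submodule B W :=
    { carrier := {y' | ∀ x, x ⊗ₜ[K] y' ∈ P}
      add_mem' := fun h h' x => by rw [tmul_add]; exact add_mem (h x) (h' x)
      zero_mem' := fun x => by rw [tmul_zero]; exact P.zero_mem
      smul_mem' := fun b y' h x => by simpa [DistribSMul.toLinearMap_apply] using hPB b _ (h x) }
  have hY : Y = ⊤ := by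
    refine (hW Y fun δ y' (hy' : ∀ x, x ⊗ₜ[K] y' ∈ P) x => ?_).resolve_left fun h => hy ?_
    · induction x using Decomposition.inductionOn 𝒱 with
      | zero => simp
      | @homogeneous α x =>
        have := hP (α + δ) _ (hy' x)
        rwa [tensorProj_tmul_of_mem_left x.2, add_sub_cancel_left] at this
      | add x x' hx hx' => rw [add_tmul]; exact add_mem hx hx'
    · exact (Submodule.mem_bot B).mp (by rw [← h]; exact hVy)
  rw [eq_top_iff, ← span_tmul_eq_top K V W, Submodule.span_le]
  rintro _ ⟨x, y', rfl⟩
  exact (hY ▸ Submodule.mem_top : y' ∈ Y) x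

end Spanning

theorem gradedSimple_tensorProduct_general
    {G : Type*} [AddCommGroup G] [DecidableEq G]
    {A B V W : Type*}
    [Ring A] [Algebra ℂ A] [Ring B] [Algebra ℂ B]
    [AddCommGroup V] [Module ℂ V] [Module A V] [IsScalarTower ℂ A V]
    [AddCommGroup W] [Module ℂ W] [Module B W] [IsScalarTower ℂ B W]
    (𝒱 : G → Submodule ℂ V) (𝒲 : G → Submodule ℂ W)
    -- `V` is a `G`-graded `A`-module, `W` a `G`-graded `B`-module
    (h𝒱 : DirectSum.IsInternal 𝒱)
    (h𝒲 : DirectSum.IsInternal 𝒲)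
    -- each homogeneous component of `V` is finite-dimensional
    (hVfin : ∀ γ : G, FiniteDimensional ℂ (𝒱 γ))
    -- `V` is `G`-graded-simple
    (hVne : ∃ v : V, v ≠ 0)
    (hVsimple : ∀ P : Submodule A V,
      (P.restrictScalars ℂ = ⨆ γ : G, (P.restrictScalars ℂ ⊓ 𝒱 γ)) → P = ⊥ ∨ P = ⊤)
    -- `W` is `G`-graded-simple
    (hWne : ∃ w : W, w ≠ 0)
    (hWsimple : ∀ Q : Submodule B W,
      (Q.restrictScalars ℂ = ⨆ γ : G, (Q.restrictScalars ℂ ⊓ 𝒲 γ)) → Q = ⊥ ∨ Q = ⊤)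
    -- no grading-preserving isomorphism between `V` and a nontrivial grading shift
    (hnoshift : ∀ α : G, α ≠ 0 →
      ¬ ∃ φ : V ≃ₗ[A] V, ∀ γ : G, ⇑φ '' (𝒱 γ : Set V) = (𝒱 (γ + α) : Set V)) :
    -- conclusion: `V ⊗ W` is `G`-graded-simple as an `A ⊗ B`-module
    (∃ t : V ⊗[ℂ] W, t ≠ 0) ∧
      ∀ P : Submodule ℂ (V ⊗[ℂ] W),
        (∀ (a : A) (b : B), ∀ t ∈ P,
          TensorProduct.map (DistribMulAction.toLinearMap ℂ V a)
            (DistribMulAction.toLinearMap ℂ W b) t ∈ P) →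
        (P = ⨆ γ : G, (P ⊓ ⨆ (p : G × G) (_ : p.1 + p.2 = γ),
          LinearMap.range (TensorProduct.map (𝒱 p.1).subtype (𝒲 p.2).subtype))) →
        P = ⊥ ∨ P = ⊤ := by
  let := h𝒱.chooseDecomposition
  let := h𝒲.chooseDecomposition
  have hV (Q : Submodule A V) (hQ : Q.IsHomogeneous 𝒱) : Q = ⊥ ∨ Q = ⊤ :=
    hVsimple Q (Submodule.IsHomogeneous.iSup_inf_eq (p := Q.restrictScalars ℂ) 𝒱 hQ).symm
  have hW (Q : Submodule B W) (hQ : Q.IsHomogeneous 𝒲) : Q = ⊥ ∨ Q = ⊤ :=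
    hWsimple Q (Submodule.IsHomogeneous.iSup_inf_eq (p := Q.restrictScalars ℂ) 𝒲 hQ).symm
  obtain ⟨v, hv⟩ := hVne
  obtain ⟨w, hw⟩ := hWne
  refine ⟨⟨v ⊗ₜ w, tmul_ne_zero_of_ne_zero hv hw⟩, fun P hPAB hPgr => ?_⟩
  -- `DistribMulAction.toLinearMap` is a deprecated alias, which `rw` and `simp` do not see through
  replace hPAB : ∀ (a : A) (b : B), ∀ t ∈ P, TensorProduct.map (DistribSMul.toLinearMap ℂ V a)
      (DistribSMul.toLinearMap ℂ W b) t ∈ P := hPAB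
  have hP (δ : G) (t) (ht : t ∈ P) : tensorProj 𝒱 𝒲 δ t ∈ P :=
    Submodule.apply_mem_of_eq_iSup_inf hPgr (fun _ _ => tensorProj_of_mem_tensorGrading) ht
  have hA1 : DistribSMul.toLinearMap ℂ V (1 : A) = LinearMap.id := LinearMap.ext (one_smul A)
  have hB1 : DistribSMul.toLinearMap ℂ W (1 : B) = LinearMap.id := LinearMap.ext (one_smul B)
  let PA : Submodule A (V ⊗[ℂ] W) :=
    { P with smul_mem' a t ht := by have := hPAB a 1 t ht; rwa [hB1] at this }
  have hPB (b : B) (t) (ht : t ∈ P) : (DistribSMul.toLinearMap ℂ W b).lTensor V t ∈ P := by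
    have := hPAB 1 b t ht; rwa [hA1] at this
  rcases eq_or_ne P ⊥ with hP0 | hP0
  · exact Or.inl hP0
  obtain ⟨x, y, β, hy, hxy, hne⟩ := exists_tmul_mem_of_ne_bot (P := PA) hV hVfin hnoshift hP
    fun h => hP0 ((Submodule.restrictScalars_eq_bot_iff ℂ A _).mpr h)
  exact Or.inr <| eq_top_of_forall_tmul_mem hW hP hPB (fun h => hne (by rw [h, tmul_zero])) <|
    forall_tmul_mem_of_tmul_mem hV (P := PA) hP hy hxy fun h => hne (by rw [h, zero_tmul])

/-- **Graded-simplicity of tensor products.**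
Let `G` be an abelian group, `A = ⊕_g A_g` and `B = ⊕_g B_g` be `G`-graded associative
unital `ℂ`-algebras, `V = ⊕_γ V_γ` a `G`-graded-simple `A`-module and `W = ⊕_γ W_γ` a
`G`-graded-simple `B`-module.  Assume each `V_γ` is finite-dimensional and that for
every `α ≠ 0` there is no `A`-module isomorphism `φ : V → V` with `φ(V_γ) = V_{γ+α}`
for all `γ` (no grading-preserving isomorphism onto a grading shift).  Then the
`A ⊗ B`-module `V ⊗ W`, with grading `(V ⊗ W)_γ = ⊕_{α+β=γ} V_α ⊗ W_β`, is
`G`-graded-simple.  (Here an `A ⊗ B`-submodule of `V ⊗[ℂ] W` is encoded as a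
`ℂ`-subspace closed under all the operators `v ⊗ w ↦ (a • v) ⊗ (b • w)`.) -/
theorem gradedSimple_tensorProduct
    {G : Type*} [AddCommGroup G] [DecidableEq G]
    {A B V W : Type*}
    [Ring A] [Algebra ℂ A] [Ring B] [Algebra ℂ B]
    [AddCommGroup V] [Module ℂ V] [Module A V] [IsScalarTower ℂ A V] [SMulCommClass A ℂ V]
    [AddCommGroup W] [Module ℂ W] [Module B W] [IsScalarTower ℂ B W] [SMulCommClass B ℂ W]
    (𝒜 : G → Submodule ℂ A) (ℬ : G → Submodule ℂ B)
    (𝒱 : G → Submodule ℂ V) (𝒲 : G → Submodule ℂ W)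
    -- `A` is a `G`-graded algebra
    (h𝒜 : DirectSum.IsInternal 𝒜) (h𝒜one : (1 : A) ∈ 𝒜 0)
    (h𝒜mul : ∀ (g h : G), ∀ a ∈ 𝒜 g, ∀ a' ∈ 𝒜 h, a * a' ∈ 𝒜 (g + h))
    -- `B` is a `G`-graded algebra
    (hℬ : DirectSum.IsInternal ℬ) (hℬone : (1 : B) ∈ ℬ 0)
    (hℬmul : ∀ (g h : G), ∀ b ∈ ℬ g, ∀ b' ∈ ℬ h, b * b' ∈ ℬ (g + h))
    -- `V` is a `G`-graded `A`-module, `W` a `G`-graded `B`-module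
    (h𝒱 : DirectSum.IsInternal 𝒱)
    (h𝒱smul : ∀ (g γ : G), ∀ a ∈ 𝒜 g, ∀ v ∈ 𝒱 γ, a • v ∈ 𝒱 (g + γ))
    (h𝒲 : DirectSum.IsInternal 𝒲)
    (h𝒲smul : ∀ (g γ : G), ∀ b ∈ ℬ g, ∀ w ∈ 𝒲 γ, b • w ∈ 𝒲 (g + γ))
    -- each homogeneous component of `V` is finite-dimensional
    (hVfin : ∀ γ : G, FiniteDimensional ℂ (𝒱 γ))
    -- `V` is `G`-graded-simple
    (hVne : ∃ v : V, v ≠ 0)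
    (hVsimple : ∀ P : Submodule A V,
      (P.restrictScalars ℂ = ⨆ γ : G, (P.restrictScalars ℂ ⊓ 𝒱 γ)) → P = ⊥ ∨ P = ⊤)
    -- `W` is `G`-graded-simple
    (hWne : ∃ w : W, w ≠ 0)
    (hWsimple : ∀ Q : Submodule B W,
      (Q.restrictScalars ℂ = ⨆ γ : G, (Q.restrictScalars ℂ ⊓ 𝒲 γ)) → Q = ⊥ ∨ Q = ⊤)
    -- no grading-preserving isomorphism between `V` and a nontrivial grading shift
    (hnoshift : ∀ α : G, α ≠ 0 →
      ¬ ∃ φ : V ≃ₗ[A] V, ∀ γ : G, ⇑φ '' (𝒱 γ : Set V) = (𝒱 (γ + α) : Set V)) :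
    -- conclusion: `V ⊗ W` is `G`-graded-simple as an `A ⊗ B`-module
    (∃ t : V ⊗[ℂ] W, t ≠ 0) ∧
      ∀ P : Submodule ℂ (V ⊗[ℂ] W),
        (∀ (a : A) (b : B), ∀ t ∈ P,
          TensorProduct.map (DistribMulAction.toLinearMap ℂ V a)
            (DistribMulAction.toLinearMap ℂ W b) t ∈ P) →
        (P = ⨆ γ : G, (P ⊓ ⨆ (p : G × G) (_ : p.1 + p.2 = γ),
          LinearMap.range (TensorProduct.map (𝒱 p.1).subtype (𝒲 p.2).subtype))) →
        P = ⊥ ∨ P = ⊤ :=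
  gradedSimple_tensorProduct_general 𝒱 𝒲 h𝒱 h𝒲 hVfin hVne hVsimple hWne hWsimple hnoshift
end
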